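/- For every integer n ≥ 1, among the 2-Motzkin paths of length n−1 that contain at least one level step, the number of paths for which 1 plus the number of up steps plus the number of wavy level steps is even equals the number of paths for which that quantity is odd. (The paper proves this by a fixed-point-free parity-reversing involution Υ that toggles the first level step between straight and wavy.) -/
import Mathlib


/-- The steps of a 2-Motzkin path: up `(1,1)`, down `(1,-1)`, straight level `(1,0)`,
and wavy level `(1,0)`. -/
inductive MStep : Type
  | U : MStep
  | D : MStep
  | Ls : MStep
  | Lw : MStep
deriving DecidableEq

/-- The height change of a step: `+1` for up, `-1` for down, `0` for level steps. -/
def MStep.val : MStep → ℤ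
  | .U => 1
  | .D => -1
  | .Ls => 0
  | .Lw => 0

/-- A word over `{U, D, Ls, Lw}` is a 2-Motzkin path if all its prefix sums are
nonnegative and its total sum is `0`. -/
def IsTwoMotzkin (p : List MStep) : Prop :=
  (∀ q : List MStep, q <+: p → 0 ≤ (q.map MStep.val).sum) ∧ (p.map MStep.val).sum = 0

/-- Toggle the first level step between straight and wavy. -/
def tog : List MStep → List MStep
  | [] => []
  | .Ls :: r => .Lw :: r
  | .Lw :: r => .Ls :: r
  | s :: r => s :: tog r

lemma tog_tog (p : List MStep) : tog (tog p) = p := by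
  induction p with
  | nil => rfl
  | cons s r ih => cases s <;> simp [tog, ih]

lemma tog_map_val (p : List MStep) : (tog p).map MStep.val = p.map MStep.val := by
  induction p with
  | nil => rfl
  | cons s r ih => cases s <;> simp [tog, ih, MStep.val]

lemma tog_length (p : List MStep) : (tog p).length = p.length := by
  induction p with
  | nil => rfl
  | cons s r ih => cases s <;> simp [tog, ih]

lemma tog_count_U (p : List MStep) : (tog p).count MStep.U = p.count MStep.U := by
  induction p with
  | nil => rfl
  | cons s r ih => cases s <;> simp [tog, ih, List.count_cons]

lemma tog_level {p : List MStep} (h : MStep.Ls ∈ p ∨ MStep.Lw ∈ p) :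
    MStep.Ls ∈ tog p ∨ MStep.Lw ∈ tog p := by
  induction p with
  | nil => simp at h
  | cons s r ih =>
    cases s with
    | Ls => simp [tog]
    | Lw => simp [tog]
    | U =>
      have : MStep.Ls ∈ r ∨ MStep.Lw ∈ r := by
        rcases h with h | h <;> simp_all
      rcases ih this with h' | h' <;> [left; right] <;> simp [tog, h']
    | D =>
      have : MStep.Ls ∈ r ∨ MStep.Lw ∈ r := by
        rcases h with h | h <;> simp_all
      rcases ih this with h' | h' <;> [left; right] <;> simp [tog, h']

lemma tog_count_Lw {p : List MStep} (h : MStep.Ls ∈ p ∨ MStep.Lw ∈ p) :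
    (tog p).count MStep.Lw = p.count MStep.Lw + 1 ∨
    p.count MStep.Lw = (tog p).count MStep.Lw + 1 := by
  induction p with
  | nil => simp at h
  | cons s r ih =>
    cases s with
    | Ls => left; simp [tog, List.count_cons]
    | Lw => right; simp [tog, List.count_cons]
    | U =>
      have : MStep.Ls ∈ r ∨ MStep.Lw ∈ r := by rcases h with h | h <;> simp_all
      rcases ih this with h' | h' <;> [left; right] <;> simp [tog, List.count_cons, h']
    | D =>
      have : MStep.Ls ∈ r ∨ MStep.Lw ∈ r := by rcases h with h | h <;> simp_all
      rcases ih this with h' | h' <;> [left; right] <;> simp [tog, List.count_cons, h']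

lemma tog_motzkin {p : List MStep} (h : IsTwoMotzkin p) : IsTwoMotzkin (tog p) := by
  obtain ⟨h1, h2⟩ := h
  refine ⟨?_, by rw [tog_map_val]; exact h2⟩
  intro q hq
  rw [List.prefix_iff_eq_take] at hq
  obtain ⟨k, rfl⟩ : ∃ k, q = (tog p).take k := ⟨q.length, hq⟩
  rw [List.map_take, tog_map_val, ← List.map_take]
  exact h1 _ (List.take_prefix _ _)

lemma tog_parity {p : List MStep} (h : MStep.Ls ∈ p ∨ MStep.Lw ∈ p)
    (he : Even (1 + p.count MStep.U + p.count MStep.Lw)) :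
    Odd (1 + (tog p).count MStep.U + (tog p).count MStep.Lw) := by
  rw [tog_count_U, Nat.odd_iff]
  rw [Nat.even_iff] at he
  rcases tog_count_Lw h with h' | h' <;> omega

/-- For every integer `n ≥ 1`, among the 2-Motzkin paths of length `n - 1` containing at
least one level step, the number of paths for which `1` plus the number of up steps plus
the number of wavy level steps is even equals the number of paths for which that quantity
is odd. -/
theorem two_motzkin_with_level_even_card_eq_odd_card (n : ℕ) (hn : 1 ≤ n) :
    {p : List MStep | p.length = n - 1 ∧ IsTwoMotzkin p ∧ (MStep.Ls ∈ p ∨ MStep.Lw ∈ p) ∧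
        Even (1 + p.count MStep.U + p.count MStep.Lw)}.ncard =
      {p : List MStep | p.length = n - 1 ∧ IsTwoMotzkin p ∧ (MStep.Ls ∈ p ∨ MStep.Lw ∈ p) ∧
        Odd (1 + p.count MStep.U + p.count MStep.Lw)}.ncard := by
  set A := {p : List MStep | p.length = n - 1 ∧ IsTwoMotzkin p ∧ (MStep.Ls ∈ p ∨ MStep.Lw ∈ p) ∧
        Even (1 + p.count MStep.U + p.count MStep.Lw)} with hA
  set B := {p : List MStep | p.length = n - 1 ∧ IsTwoMotzkin p ∧ (MStep.Ls ∈ p ∨ MStep.Lw ∈ p) ∧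
        Odd (1 + p.count MStep.U + p.count MStep.Lw)} with hB
  have hinj : Function.Injective tog := by
    intro a b hab
    have := congrArg tog hab
    rwa [tog_tog, tog_tog] at this
  have himg : tog '' A = B := by
    apply Set.Subset.antisymm
    · rintro q ⟨p, ⟨hl, hm, hlev, hpar⟩, rfl⟩
      exact ⟨by rw [tog_length]; exact hl, tog_motzkin hm, tog_level hlev, tog_parity hlev hpar⟩
    · rintro q ⟨hl, hm, hlev, hpar⟩
      refine ⟨tog q, ⟨by rw [tog_length]; exact hl, tog_motzkin hm, tog_level hlev, ?_⟩,
        tog_tog q⟩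
      have h1 := tog_count_U q
      rw [Nat.even_iff]
      rw [Nat.odd_iff] at hpar
      rcases tog_count_Lw hlev with h' | h' <;> omega
  rw [← himg, Set.ncard_image_of_injective _ hinj]
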